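/- arXiv:2505.08158 — 6 statements merged into one kernel-verified Lean document; each statement's English description precedes it below -/
import Mathlib

section
/- Boundedness of the adjustment iterates (the paper's auxiliary Lemma, with the constant adapted to the j-step feedback delay): for every time t ≥ 1, the adjustment sequence satisfies −(M + (j+1)·γ) ≤ a(t) ≤ M + (j+1)·γ. -/
/-- Boundedness of the adjustment iterates: for every `t ≥ 1`,
`-(M + (j+1)·γ) ≤ a t ≤ M + (j+1)·γ`. -/
theorem adjustment_bounded
    (α γ M : ℝ) (j : ℕ)
    (hα0 : 0 ≤ α) (hα1 : α ≤ 1) (hγ : 0 < γ) (hM : 0 ≤ M)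
    (s qhat a cover : ℕ → ℝ)
    (hs : ∀ t, 1 ≤ t → 0 ≤ s t ∧ s t ≤ M)
    (hq : ∀ t, 1 ≤ t → 0 ≤ qhat t ∧ qhat t ≤ M)
    (hcover : ∀ t, cover t =
      if 0 < qhat t + a t ∧ s t ≤ qhat t + a t then (1 : ℝ) else 0)
    (ha0 : ∀ t, 1 ≤ t → t ≤ j + 1 → a t = 0)
    (harec : ∀ t, j + 1 ≤ t → a (t + 1) = a t + γ * (1 - cover (t - j) - α)) :
    ∀ t, 1 ≤ t → -(M + (j + 1 : ℝ) * γ) ≤ a t ∧ a t ≤ M + (j + 1 : ℝ) * γ := by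
  have hcov01 : ∀ t, cover t = 0 ∨ cover t = 1 := by
    intro t; rw [hcover t]; split <;> simp
  have hstep : ∀ t, 1 ≤ t → a t - γ ≤ a (t + 1) ∧ a (t + 1) ≤ a t + γ := by
    intro t ht
    by_cases hc : j + 1 ≤ t
    · have hr := harec t hc
      rcases hcov01 (t - j) with h | h <;> rw [h] at hr <;>
        constructor <;> nlinarith
    · push_neg at hc
      have h1 : a t = 0 := ha0 t ht (by omega)
      have h2 : a (t + 1) = 0 := ha0 (t + 1) (by omega) (by omega)
      rw [h1, h2]; constructor <;> linarith
  have hdiff : ∀ k t, 1 ≤ t → |a (t + k) - a t| ≤ (k : ℝ) * γ := by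
    intro k
    induction k with
    | zero => intro t ht; simp
    | succ n ih =>
      intro t ht
      have h1 := ih t ht
      have h2 := hstep (t + n) (by omega)
      have heq : t + (n + 1) = (t + n) + 1 := by omega
      rw [heq]
      calc |a (t + n + 1) - a t|
          ≤ |a (t + n + 1) - a (t + n)| + |a (t + n) - a t| := abs_sub_le _ _ _
        _ ≤ γ + (n : ℝ) * γ := by
            refine add_le_add ?_ h1
            rw [abs_le]; constructor <;> linarith [h2.1, h2.2]
        _ = ((n : ℕ) + 1 : ℝ) * γ := by ring
        _ ≤ ((n + 1 : ℕ) : ℝ) * γ := by push_cast; ring_nf; exact le_rfl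
  intro t ht
  induction t, ht using Nat.le_induction with
  | base =>
    have h1 : a 1 = 0 := ha0 1 le_rfl (by omega)
    rw [h1]
    constructor <;> nlinarith [Nat.cast_nonneg (α := ℝ) j]
  | succ t ht ih =>
    by_cases hc : j + 1 ≤ t
    · set u := t - j with hu
      have hu1 : 1 ≤ u := by omega
      have hut : u + j = t := by omega
      have hd : |a t - a u| ≤ (j : ℝ) * γ := by
        have := hdiff j u hu1; rwa [hut] at this
      have hrec : a (t + 1) = a t + γ * (1 - cover u - α) := harec t hc
      rw [abs_le] at hd
      obtain ⟨hq0, hqM⟩ := hq u hu1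
      obtain ⟨hs0, hsM⟩ := hs u hu1
      constructor
      · -- lower bound
        by_cases hlow : -(M + (j : ℝ) * γ) ≤ a t
        · have := (hstep t (by omega)).1
          have : a t - γ ≤ a (t + 1) := this
          linarith
        · push_neg at hlow
          have hau : a u < -M := by linarith [hd.2]
          have hcu : cover u = 0 := by
            rw [hcover u, if_neg]
            rintro ⟨h1, -⟩
            linarith
          rw [hrec, hcu]
          have : 0 ≤ γ * (1 - 0 - α) := by nlinarith
          linarith [ih.1]
      · -- upper bound
        by_cases hhigh : a t ≤ M + (j : ℝ) * γ
        · have := (hstep t (by omega)).2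
          linarith
        · push_neg at hhigh
          have hau : M < a u := by linarith [hd.1]
          have hcu : cover u = 1 := by
            rw [hcover u, if_pos]
            constructor <;> linarith
          rw [hrec, hcu]
          have : γ * (1 - 1 - α) ≤ 0 := by nlinarith
          linarith [ih.2]
    · have h2 : a (t + 1) = 0 := ha0 (t + 1) (by omega) (by omega)
      rw [h2]
      constructor <;> nlinarith [Nat.cast_nonneg (α := ℝ) j]
end

section
/- Coverage guarantee (the paper's Theorem 1, with the constant adapted to the j-step feedback delay): for every horizon T ≥ 1, the empirical coverage frequency satisfies |(1/T)·Σ_{t=1}^{T} cover(t) − (1 − α)| ≤ 2·((M + (j+1)·γ)/(T·γ) + (j+1)/T). In particular the empirical coverage deviates from the nominal level 1 − α by at most O(1/T). -/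
open Finset

/-- Coverage guarantee (Theorem 1, with the constant adapted to the `j`-step
feedback delay): for every `T ≥ 1`,
`|(1/T)·∑_{t=1}^T cover t − (1 − α)| ≤ 2·((M + (j+1)γ)/(Tγ) + (j+1)/T)`. -/
theorem coverage_guarantee
    (α γ M : ℝ) (j : ℕ)
    (hα0 : 0 ≤ α) (hα1 : α ≤ 1) (hγ : 0 < γ) (hM : 0 ≤ M)
    (s qhat a cover : ℕ → ℝ)
    (hs : ∀ t, 1 ≤ t → 0 ≤ s t ∧ s t ≤ M)
    (hq : ∀ t, 1 ≤ t → 0 ≤ qhat t ∧ qhat t ≤ M)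
    (hcover : ∀ t, cover t =
      if 0 < qhat t + a t ∧ s t ≤ qhat t + a t then (1 : ℝ) else 0)
    (ha0 : ∀ t, 1 ≤ t → t ≤ j + 1 → a t = 0)
    (harec : ∀ t, j + 1 ≤ t → a (t + 1) = a t + γ * (1 - cover (t - j) - α)) :
    ∀ T : ℕ, 1 ≤ T →
      |(1 / (T : ℝ)) * ∑ t ∈ Icc 1 T, cover t - (1 - α)| ≤
        2 * ((M + (j + 1 : ℝ) * γ) / ((T : ℝ) * γ) + ((j : ℝ) + 1) / (T : ℝ)) := by
  intro T hT
  have hcov01 : ∀ t, cover t = 0 ∨ cover t = 1 := by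
    intro t; rw [hcover t]; split <;> simp
  have hcov0 : ∀ t, 0 ≤ cover t := by
    intro t; rcases hcov01 t with h | h <;> simp [h]
  have hcov1 : ∀ t, cover t ≤ 1 := by
    intro t; rcases hcov01 t with h | h <;> simp [h]
  have step_up : ∀ t, j + 1 ≤ t → a (t + 1) ≤ a t + γ := by
    intro t ht
    rw [harec t ht]
    have := hcov0 (t - j)
    nlinarith
  have step_down : ∀ t, j + 1 ≤ t → a t - γ ≤ a (t + 1) := by
    intro t ht
    rw [harec t ht]
    have := hcov1 (t - j)
    nlinarith
  have chain_up : ∀ d m, j + 1 ≤ m → a (m + d) ≤ a m + (d : ℝ) * γ := by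
    intro d
    induction d with
    | zero => intro m hm; simp
    | succ d ih =>
      intro m hm
      have h1 := step_up (m + d) (le_trans hm (Nat.le_add_right _ _))
      have h2 := ih m hm
      have e : m + (d + 1) = (m + d) + 1 := by omega
      rw [e]
      push_cast
      linarith
  have chain_down : ∀ (d m : ℕ), j + 1 ≤ m → a m - (d : ℝ) * γ ≤ a (m + d) := by
    intro d
    induction d with
    | zero => intro m hm; simp
    | succ d ih =>
      intro m hm
      have h1 := step_down (m + d) (le_trans hm (Nat.le_add_right _ _))
      have h2 := ih m hm
      have e : m + (d + 1) = (m + d) + 1 := by omega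
      rw [e]
      push_cast
      linarith
  have big_down : ∀ t, j + 1 ≤ t → M < a (t - j) → a (t + 1) ≤ a t := by
    intro t ht hbig
    have ht1 : 1 ≤ t - j := by omega
    have hc : cover (t - j) = 1 := by
      rw [hcover]
      rw [if_pos]
      constructor
      · linarith [(hq _ ht1).1]
      · linarith [(hs _ ht1).2, (hq _ ht1).1]
    rw [harec t ht, hc]
    nlinarith [mul_nonneg hγ.le hα0]
  have big_up : ∀ t, j + 1 ≤ t → a (t - j) < -M → a t ≤ a (t + 1) := by
    intro t ht hbig
    have ht1 : 1 ≤ t - j := by omega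
    have hc : cover (t - j) = 0 := by
      rw [hcover]
      rw [if_neg]
      rintro ⟨h1, -⟩
      linarith [(hq _ ht1).2]
    rw [harec t ht, hc]
    nlinarith [mul_nonneg hγ.le (by linarith : (0:ℝ) ≤ 1 - α)]
  have hB0 : (0:ℝ) ≤ M + ((j : ℝ) + 1) * γ := by positivity
  -- upper bound on a
  have U : ∀ t, j + 1 ≤ t → a t ≤ M + ((j : ℝ) + 1) * γ := by
    refine Nat.le_induction ?_ ?_
    · rw [ha0 (j + 1) (by omega) le_rfl]; exact hB0
    · intro t ht ih
      by_cases hcase : M < a (t - j)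
      · exact le_trans (big_down t ht hcase) ih
      · push_neg at hcase
        have key : a t ≤ M + (j : ℝ) * γ := by
          by_cases h2 : 2 * j + 1 ≤ t
          · have e : t = (t - j) + j := by omega
            have hc := chain_up j (t - j) (by omega)
            nth_rewrite 1 [e]
            linarith
          · have e : t = (j + 1) + (t - (j + 1)) := by omega
            have hc := chain_up (t - (j + 1)) (j + 1) le_rfl
            have hz : a (j + 1) = 0 := ha0 _ (by omega) le_rfl
            have hd : ((t - (j + 1) : ℕ) : ℝ) ≤ (j : ℝ) := by
              exact_mod_cast (by omega : t - (j + 1) ≤ j)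
            have h' : a t ≤ ((t - (j + 1) : ℕ) : ℝ) * γ := by
              nth_rewrite 1 [e]
              linarith
            nlinarith
        have := step_up t ht
        linarith
  have L : ∀ t, j + 1 ≤ t → -(M + ((j : ℝ) + 1) * γ) ≤ a t := by
    refine Nat.le_induction ?_ ?_
    · rw [ha0 (j + 1) (by omega) le_rfl]; linarith
    · intro t ht ih
      by_cases hcase : a (t - j) < -M
      · exact le_trans ih (big_up t ht hcase)
      · push_neg at hcase
        have key : -(M + (j : ℝ) * γ) ≤ a t := by
          by_cases h2 : 2 * j + 1 ≤ t
          · have e : t = (t - j) + j := by omega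
            have hc := chain_down j (t - j) (by omega)
            nth_rewrite 1 [e]
            linarith
          · obtain ⟨d, rfl⟩ : ∃ d, t = (j + 1) + d := ⟨t - (j + 1), by omega⟩
            have hc := chain_down d (j + 1) le_rfl
            have hz : a (j + 1) = 0 := ha0 _ (by omega) le_rfl
            have hd : ((d : ℕ) : ℝ) ≤ (j : ℝ) := by
              exact_mod_cast (by omega : d ≤ j)
            nlinarith
        have := step_down t ht
        linarith
  -- telescoping identity
  have tele : ∀ n : ℕ, a (j + 1 + n) =
      γ * ((n : ℝ) * (1 - α) - ∑ t ∈ Icc 1 n, cover t) := by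
    intro n
    induction n with
    | zero => simp [ha0 (j + 1) (by omega) le_rfl]
    | succ n ih =>
      have e : j + 1 + (n + 1) = (j + 1 + n) + 1 := by omega
      rw [e, harec (j + 1 + n) (by omega)]
      have e2 : (j + 1 + n) - j = n + 1 := by omega
      rw [e2, ih, Finset.sum_Icc_succ_top (by omega : 1 ≤ n + 1)]
      push_cast
      ring
  have hTpos : (0:ℝ) < (T : ℝ) := by exact_mod_cast hT
  have habs : |a (j + 1 + T)| ≤ M + ((j : ℝ) + 1) * γ := by
    rw [abs_le]
    exact ⟨L _ (by omega), U _ (by omega)⟩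
  rw [tele T] at habs
  have hTγ : (0:ℝ) < (T : ℝ) * γ := by positivity
  have hX : (1 / (T : ℝ)) * ∑ t ∈ Icc 1 T, cover t - (1 - α) =
      -(γ * ((T : ℝ) * (1 - α) - ∑ t ∈ Icc 1 T, cover t)) / ((T : ℝ) * γ) := by
    field_simp
    ring
  have hRHS : 2 * ((M + ((j : ℝ) + 1) * γ) / ((T : ℝ) * γ) + ((j : ℝ) + 1) / (T : ℝ)) =
      (2 * (M + ((j : ℝ) + 1) * γ) + 2 * ((j : ℝ) + 1) * γ) / ((T : ℝ) * γ) := by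
    field_simp
  rw [hX, hRHS, abs_div, abs_neg, abs_of_pos hTγ]
  have hnum : |γ * ((T : ℝ) * (1 - α) - ∑ t ∈ Icc 1 T, cover t)| ≤
      2 * (M + ((j : ℝ) + 1) * γ) + 2 * ((j : ℝ) + 1) * γ := by
    have : (0:ℝ) ≤ ((j : ℝ) + 1) * γ := by positivity
    linarith
  exact (div_le_div_iff_of_pos_right hTγ).mpr hnum
end

section
/- Conditional coverage bound (intermediate claim in the proof of the paper's Theorem 1): if B ≥ 0 is such that |a(t)| ≤ B for all 1 ≤ t ≤ T, then |(1/T)·Σ_{t=1}^{T} cover(t) − (1 − α)| ≤ 2B/(T·γ) + (j+1)/T. -/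
open Finset

/-- Conditional coverage bound: if `|a t| ≤ B` for all `1 ≤ t ≤ T`, then
`|(1/T)·∑_{t=1}^T cover t − (1 − α)| ≤ 2B/(Tγ) + (j+1)/T`. -/
theorem coverage_bound_of_bounded_adjustment
    (α γ M : ℝ) (j : ℕ)
    (hα0 : 0 ≤ α) (hα1 : α ≤ 1) (hγ : 0 < γ) (hM : 0 ≤ M)
    (s qhat a cover : ℕ → ℝ)
    (hs : ∀ t, 1 ≤ t → 0 ≤ s t ∧ s t ≤ M)
    (hq : ∀ t, 1 ≤ t → 0 ≤ qhat t ∧ qhat t ≤ M)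
    (hcover : ∀ t, cover t =
      if 0 < qhat t + a t ∧ s t ≤ qhat t + a t then (1 : ℝ) else 0)
    (ha0 : ∀ t, 1 ≤ t → t ≤ j + 1 → a t = 0)
    (harec : ∀ t, j + 1 ≤ t → a (t + 1) = a t + γ * (1 - cover (t - j) - α))
    (T : ℕ) (hT : 1 ≤ T) (B : ℝ) (hB0 : 0 ≤ B)
    (hB : ∀ t, 1 ≤ t → t ≤ T → |a t| ≤ B) :
    |(1 / (T : ℝ)) * ∑ t ∈ Icc 1 T, cover t - (1 - α)| ≤
      2 * B / ((T : ℝ) * γ) + ((j : ℝ) + 1) / (T : ℝ) := by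
  have hT0 : (0:ℝ) < T := by exact_mod_cast hT
  have hc01 : ∀ t, 0 ≤ cover t ∧ cover t ≤ 1 := by
    intro t; rw [hcover t]; split <;> norm_num
  have hS0 : 0 ≤ ∑ t ∈ Icc 1 T, cover t :=
    Finset.sum_nonneg fun t _ => (hc01 t).1
  have hS1 : ∑ t ∈ Icc 1 T, cover t ≤ (T:ℝ) := by
    calc ∑ t ∈ Icc 1 T, cover t ≤ ∑ t ∈ Icc 1 T, (1:ℝ) :=
          Finset.sum_le_sum fun t _ => (hc01 t).2
      _ = (T:ℝ) := by simp [Nat.card_Icc]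
  have hBγ : 0 ≤ 2 * B / ((T:ℝ) * γ) := by positivity
  by_cases hTj : T ≤ j + 1
  · have h1 : |(1 / (T : ℝ)) * ∑ t ∈ Icc 1 T, cover t - (1 - α)| ≤ 1 := by
      have hinv : 0 < 1 / (T:ℝ) := by positivity
      have h2 : (1 / (T:ℝ)) * ∑ t ∈ Icc 1 T, cover t ≤ 1 := by
        have h := mul_le_mul_of_nonneg_left hS1 hinv.le
        rw [one_div] at h ⊢
        calc (↑T)⁻¹ * ∑ t ∈ Icc 1 T, cover t ≤ (↑T)⁻¹ * ↑T := h
          _ = 1 := inv_mul_cancel₀ hT0.ne'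
      have h3 : 0 ≤ (1 / (T:ℝ)) * ∑ t ∈ Icc 1 T, cover t :=
        mul_nonneg hinv.le hS0
      rw [abs_le]; constructor <;> nlinarith
    have h2 : (1:ℝ) ≤ ((j:ℝ)+1)/(T:ℝ) := by
      rw [le_div_iff₀ hT0]
      have : (T:ℝ) ≤ (j:ℝ)+1 := by exact_mod_cast hTj
      linarith
    linarith
  · push_neg at hTj
    have hjT : j + 2 ≤ T := hTj
    have key : ∀ t, j + 1 ≤ t →
        a t = γ * ∑ u ∈ Icc 1 (t - (j+1)), (1 - cover u - α) := by
      intro t ht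
      induction t, ht using Nat.le_induction with
      | base => simp [ha0 (j+1) (by omega) le_rfl]
      | succ t ht ih =>
        rw [harec t ht, ih]
        have h1 : t + 1 - (j+1) = (t - (j+1)) + 1 := by omega
        have h2 : t - j = (t - (j+1)) + 1 := by omega
        rw [h1, Finset.sum_Icc_succ_top (by omega), h2]
        ring
    set N := T - (j+1) with hNdef
    have hNcast : ((N:ℕ):ℝ) = (T:ℝ) - ((j:ℝ)+1) := by
      rw [hNdef, Nat.cast_sub (by omega)]; push_cast; ring
    have hsplit : ∑ u ∈ Icc 1 N, (1 - cover u - α)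
        = (N:ℝ)*(1-α) - ∑ u ∈ Icc 1 N, cover u := by
      rw [show (∑ u ∈ Icc 1 N, (1 - cover u - α))
          = ∑ u ∈ Icc 1 N, ((1-α) - cover u) from
        Finset.sum_congr rfl (fun u _ => by ring)]
      rw [Finset.sum_sub_distrib, Finset.sum_const, Nat.card_Icc]
      simp [mul_comm]
    have hKT := key T (by omega)
    rw [hsplit] at hKT
    have hIcc : ∑ t ∈ Icc 1 T, cover t
        = ∑ t ∈ Icc 1 N, cover t + ∑ t ∈ Ioc N T, cover t := by
      rw [show Icc 1 T = Ioc 0 T from (Finset.Icc_add_one_left_eq_Ioc 0 T).symm,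
          show Icc 1 N = Ioc 0 N from (Finset.Icc_add_one_left_eq_Ioc 0 N).symm]
      exact (Finset.sum_Ioc_consecutive cover (Nat.zero_le N) (by omega)).symm
    have htail0 : 0 ≤ ∑ t ∈ Ioc N T, cover t :=
      Finset.sum_nonneg fun t _ => (hc01 t).1
    have htail1 : ∑ t ∈ Ioc N T, cover t ≤ (j:ℝ) + 1 := by
      calc ∑ t ∈ Ioc N T, cover t ≤ ∑ t ∈ Ioc N T, (1:ℝ) :=
            Finset.sum_le_sum fun t _ => (hc01 t).2
        _ = ((T - N : ℕ) : ℝ) := by simp [Nat.card_Ioc]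
        _ = (j:ℝ) + 1 := by
            rw [show T - N = j + 1 from by omega]; push_cast; ring
    have haT : |a T| ≤ B := hB T hT le_rfl
    have habs : |∑ t ∈ Icc 1 T, cover t - (T:ℝ)*(1-α)| ≤ ((j:ℝ)+1) + B/γ := by
      have hS1eq : ∑ u ∈ Icc 1 N, cover u = (N:ℝ)*(1-α) - a T / γ := by
        field_simp at hKT ⊢; linarith
      rw [hIcc, hS1eq, hNcast]
      obtain ⟨h1, h2⟩ := abs_le.mp haT
      have hxu : a T / γ ≤ B / γ := by gcongr
      have hxl0 : (-B) / γ ≤ a T / γ := by gcongr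
      have hxl : -(B/γ) ≤ a T / γ := by
        have : (-B)/γ = -(B/γ) := by ring
        linarith [hxl0]
      rw [abs_le]
      constructor <;> nlinarith [hxl, hxu]
    have heq : (1 / (T:ℝ)) * ∑ t ∈ Icc 1 T, cover t - (1 - α)
        = (∑ t ∈ Icc 1 T, cover t - (T:ℝ)*(1-α)) / (T:ℝ) := by
      field_simp
    rw [heq, abs_div, abs_of_pos hT0]
    have hstep : |∑ t ∈ Icc 1 T, cover t - (T:ℝ)*(1-α)| / (T:ℝ)
        ≤ (((j:ℝ)+1) + B/γ) / (T:ℝ) := by gcongr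
    have heq2 : (((j:ℝ)+1) + B/γ) / (T:ℝ) = ((j:ℝ)+1)/(T:ℝ) + B/((T:ℝ)*γ) := by
      field_simp
    have hB2 : B/((T:ℝ)*γ) ≤ 2*B/((T:ℝ)*γ) := by gcongr; linarith
    linarith
end

section
/- Asymptotic coverage convergence (the requirement (5) the paper derives from its Theorem 1): the empirical coverage frequency (1/T)·Σ_{t=1}^{T} cover(t) converges to 1 − α as T → ∞. -/
open Finset Filter

/-- Asymptotic coverage convergence: the empirical coverage frequency
`(1/T)·∑_{t=1}^T cover t` converges to `1 − α` as `T → ∞`. -/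
theorem coverage_tendsto
    (α γ M : ℝ) (j : ℕ)
    (hα0 : 0 ≤ α) (hα1 : α ≤ 1) (hγ : 0 < γ) (hM : 0 ≤ M)
    (s qhat a cover : ℕ → ℝ)
    (hs : ∀ t, 1 ≤ t → 0 ≤ s t ∧ s t ≤ M)
    (hq : ∀ t, 1 ≤ t → 0 ≤ qhat t ∧ qhat t ≤ M)
    (hcover : ∀ t, cover t =
      if 0 < qhat t + a t ∧ s t ≤ qhat t + a t then (1 : ℝ) else 0)
    (ha0 : ∀ t, 1 ≤ t → t ≤ j + 1 → a t = 0)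
    (harec : ∀ t, j + 1 ≤ t → a (t + 1) = a t + γ * (1 - cover (t - j) - α)) :
    Tendsto (fun T : ℕ => (1 / (T : ℝ)) * ∑ t ∈ Icc 1 T, cover t)
      atTop (nhds (1 - α)) := by
  have hc01 : ∀ t, 0 ≤ cover t ∧ cover t ≤ 1 := by
    intro t; rw [hcover t]; split <;> norm_num
  -- single step bound
  have hstep : ∀ t, 1 ≤ t → |a (t + 1) - a t| ≤ γ := by
    intro t ht
    by_cases h : j + 1 ≤ t
    · rw [harec t h]
      have h1 := (hc01 (t - j)).1
      have h2 := (hc01 (t - j)).2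
      rw [abs_le]
      constructor <;> nlinarith
    · push_neg at h
      rw [ha0 t ht (by omega), ha0 (t + 1) (by omega) (by omega)]
      simp [le_of_lt hγ]
  -- multi-step bound
  have hksb : ∀ k t, 1 ≤ t → |a (t + k) - a t| ≤ k * γ := by
    intro k
    induction k with
    | zero => intro t ht; simp
    | succ k ih =>
      intro t ht
      have h1 := ih t ht
      have h2 := hstep (t + k) (by omega)
      have heq : a (t + (k + 1)) - a t = (a (t + k + 1) - a (t + k)) + (a (t + k) - a t) := by
        have : t + (k + 1) = t + k + 1 := by omega
        rw [this]; ring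
      rw [heq]
      have := abs_add_le (a (t + k + 1) - a (t + k)) (a (t + k) - a t)
      push_cast
      linarith
  set C : ℝ := M + (j + 1) * γ with hC
  have hCpos : 0 ≤ C := by positivity
  -- boundedness of a
  have habound : ∀ t, 1 ≤ t → |a t| ≤ C := by
    intro t
    induction t with
    | zero => intro h; omega
    | succ t ih =>
      intro _
      by_cases h0 : t = 0
      · subst h0; rw [ha0 1 le_rfl (by omega)]; simpa
      have ht1 : 1 ≤ t := by omega
      have ihb := ih ht1
      by_cases h : j + 1 ≤ t
      · rw [abs_le] at ihb ⊢
        constructor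
        · by_cases hlow : -(M + (j : ℝ) * γ) ≤ a t
          · rw [harec t h]
            have := (hc01 (t - j)).2
            nlinarith
          · push_neg at hlow
            have ht2 : j + 2 ≤ t := by
              by_contra hh
              have : t ≤ j + 1 := by omega
              rw [ha0 t ht1 this] at hlow
              have : (0:ℝ) ≤ (j : ℝ) * γ := by positivity
              linarith
            have hu1 : 1 ≤ t - j := by omega
            have hd := hksb j (t - j) hu1
            have htj : t - j + j = t := by omega
            rw [htj, abs_le] at hd
            have hau : a (t - j) < -M := by linarith
            have hcov : cover (t - j) = 0 := by
              rw [hcover]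
              have hq2 := (hq (t - j) hu1).2
              rw [if_neg]
              rintro ⟨h1, h2⟩; linarith
            rw [harec t h, hcov]
            nlinarith
        · by_cases hhi : a t ≤ M + (j : ℝ) * γ
          · rw [harec t h]
            have := (hc01 (t - j)).1
            nlinarith
          · push_neg at hhi
            have ht2 : j + 2 ≤ t := by
              by_contra hh
              have : t ≤ j + 1 := by omega
              rw [ha0 t ht1 this] at hhi
              have : (0:ℝ) ≤ (j : ℝ) * γ := by positivity
              linarith
            have hu1 : 1 ≤ t - j := by omega
            have hd := hksb j (t - j) hu1
            have htj : t - j + j = t := by omega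
            rw [htj, abs_le] at hd
            have hau : M < a (t - j) := by linarith
            have hcov : cover (t - j) = 1 := by
              rw [hcover]
              have hq1 := (hq (t - j) hu1).1
              have hs2 := (hs (t - j) hu1).2
              rw [if_pos]
              constructor <;> linarith
            rw [harec t h, hcov]
            nlinarith
      · push_neg at h
        rw [ha0 (t + 1) (by omega) (by omega)]
        simpa
  -- telescoping
  have hsum : ∀ T : ℕ, a (j + 1 + T) = γ * ∑ u ∈ Icc 1 T, (1 - cover u - α) := by
    intro T
    induction T with
    | zero => simp [ha0 (j + 1) (by omega) le_rfl]
    | succ T ih =>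
      have h1 : j + 1 + (T + 1) = (j + 1 + T) + 1 := by omega
      rw [h1, harec (j + 1 + T) (by omega), ih]
      have h2 : j + 1 + T - j = T + 1 := by omega
      rw [h2, Finset.sum_Icc_succ_top (by omega : 1 ≤ T + 1)]
      ring
  -- key bound
  have hkey : ∀ N : ℕ, |(∑ t ∈ Icc 1 N, cover t) - (N : ℝ) * (1 - α)| ≤ C / γ + j := by
    intro N
    have hCγ : (0:ℝ) ≤ C / γ := by positivity
    by_cases hN : N ≤ j
    · have hub : (∑ t ∈ Icc 1 N, cover t) ≤ N := by
        calc (∑ t ∈ Icc 1 N, cover t) ≤ ∑ t ∈ Icc 1 N, (1 : ℝ) :=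
              Finset.sum_le_sum (fun i _ => (hc01 i).2)
          _ = N := by simp
      have hlb : (0:ℝ) ≤ ∑ t ∈ Icc 1 N, cover t :=
        Finset.sum_nonneg (fun i _ => (hc01 i).1)
      have hNj : (N : ℝ) ≤ j := by exact_mod_cast hN
      have hN0 : (0:ℝ) ≤ (N : ℝ) := Nat.cast_nonneg N
      have h1 : (0:ℝ) ≤ (N : ℝ) * (1 - α) := by nlinarith
      have h2 : (N : ℝ) * (1 - α) ≤ N := by nlinarith
      rw [abs_le]; constructor <;> nlinarith
    · push_neg at hN
      set T := N - j with hT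
      have hNT : N = j + T := by omega
      have hT1 : 1 ≤ T := by omega
      have hsplit : (∑ t ∈ Icc 1 N, cover t)
          = (∑ t ∈ Icc 1 T, cover t) + ∑ t ∈ Ioc T N, cover t := by
        have h01 : (Icc 1 T : Finset ℕ) = Ioc 0 T := by ext x; simp; omega
        have h02 : (Icc 1 N : Finset ℕ) = Ioc 0 N := by ext x; simp; omega
        rw [h01, h02, ← Finset.sum_Ioc_consecutive _ (Nat.zero_le T) (by omega : T ≤ N)]
      have hS1 : |(∑ t ∈ Icc 1 T, cover t) - (T : ℝ) * (1 - α)| ≤ C / γ := by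
        have h1 := hsum T
        have hcard : (Icc 1 T).card = T := by simp
        have hexp : (∑ u ∈ Icc 1 T, (1 - cover u - α))
            = (T : ℝ) * (1 - α) - ∑ u ∈ Icc 1 T, cover u := by
          rw [Finset.sum_sub_distrib, Finset.sum_sub_distrib]
          simp [hcard]
          ring
        rw [hexp] at h1
        have hab := habound (j + 1 + T) (by omega)
        rw [h1, abs_mul, abs_of_pos hγ, mul_comm] at hab
        rw [abs_sub_comm, le_div_iff₀ hγ]
        exact hab
      have hS2ub : (∑ t ∈ Ioc T N, cover t) ≤ j := by
        calc (∑ t ∈ Ioc T N, cover t) ≤ ∑ t ∈ Ioc T N, (1:ℝ) :=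
              Finset.sum_le_sum (fun i _ => (hc01 i).2)
          _ = ((Ioc T N).card : ℝ) := by simp
          _ = j := by rw [Nat.card_Ioc]; congr 1; omega
      have hS2lb : (0:ℝ) ≤ ∑ t ∈ Ioc T N, cover t :=
        Finset.sum_nonneg (fun i _ => (hc01 i).1)
      have hNcast : (N : ℝ) * (1 - α) = (j : ℝ) * (1 - α) + (T : ℝ) * (1 - α) := by
        have : (N : ℝ) = (j : ℝ) + T := by exact_mod_cast hNT
        rw [this]; ring
      have hj00 : (0:ℝ) ≤ (j:ℝ) := Nat.cast_nonneg j
      have hj0 : (0:ℝ) ≤ (j:ℝ) * (1 - α) := by nlinarith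
      have hj1 : (j:ℝ) * (1 - α) ≤ j := by nlinarith
      rw [hsplit, abs_le]
      rw [abs_le] at hS1
      constructor <;> linarith
  -- conclude
  rw [← tendsto_sub_nhds_zero_iff]
  refine squeeze_zero_norm' ?_ (tendsto_const_div_atTop_nhds_zero_nat (C / γ + j))
  · filter_upwards [eventually_ge_atTop 1] with N hN
    have hN0 : (0:ℝ) < N := by exact_mod_cast hN
    have heq : (1 / (N:ℝ)) * (∑ t ∈ Icc 1 N, cover t) - (1 - α)
        = (1 / (N:ℝ)) * ((∑ t ∈ Icc 1 N, cover t) - (N:ℝ) * (1 - α)) := by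
      field_simp
    rw [Real.norm_eq_abs, heq, abs_mul, abs_of_pos (by positivity : (0:ℝ) < 1/(N:ℝ))]
    rw [div_eq_mul_one_div (C / γ + (j:ℝ)) (N:ℝ), mul_comm (C / γ + (j:ℝ))]
    exact mul_le_mul_of_nonneg_left (hkey N) (by positivity)
end

section
/- Global average coverage over all dimensions and prediction steps (requirement (4) of the paper, which follows from per-coordinate coverage convergence): with p dimensions and d₁ prediction steps, and an independent copy of the adaptive-adjustment setup for each pair (i, j) (1 ≤ i ≤ p, 1 ≤ j ≤ d₁) with lag equal to the prediction step j, the overall empirical coverage (1/(T·p·d₁))·Σ_{t=1}^{T} Σ_{i=1}^{p} Σ_{j=1}^{d₁} cover^{(i,j)}(t) converges to 1 − α as T → ∞. -/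
open Finset Filter

/-!
Each adjustment sequence stays bounded: once `a` exceeds `M`, the interval `[0, q̂ + a]` covers
every error in `[0, M]`, so `j` steps later the update stops pushing `a` upwards, and in the
meantime `a` grows by at most `γ` per step; symmetrically from below. On the other hand the
update telescopes, `γ⁻¹ a (T + j + 1) = T (1 - α) - ∑_{t ≤ T} cover t`, so the coverage count
of every pair `(i, j)` deviates from `T (1 - α)` by a bounded amount, and the averages converge.
-/

structure IsACIAdjustment (α γ : ℝ) (j : ℕ) (cover a : ℕ → ℝ) : Prop where
  eq_zero : ∀ t, 1 ≤ t → t ≤ j + 1 → a t = 0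
  succ_eq : ∀ t, j + 1 ≤ t → a (t + 1) = a t + γ * (1 - cover (t - j) - α)

namespace IsACIAdjustment

variable {α γ M : ℝ} {j : ℕ} {c a : ℕ → ℝ}

/-- Flipping the sign exchanges covering and missing, so lower bounds on `a` follow from upper
bounds. -/
theorem neg (ha : IsACIAdjustment α γ j c a) :
    IsACIAdjustment (1 - α) γ j (fun t => 1 - c t) (-a) where
  eq_zero t h1 h2 := by simp [ha.eq_zero t h1 h2]
  succ_eq t ht := by simp only [Pi.neg_apply, ha.succ_eq t ht]; ring

theorem succ_le_add (ha : IsACIAdjustment α γ j c a) (hγ : 0 ≤ γ) (hα : 0 ≤ α)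
    (hc : ∀ t, 1 ≤ t → 0 ≤ c t) {t : ℕ} (ht : 1 ≤ t) : a (t + 1) ≤ a t + γ := by
  rcases le_or_gt (j + 1) t with h | h
  · rw [ha.succ_eq t h]
    nlinarith [hc (t - j) (by omega)]
  · rw [ha.eq_zero t ht h.le, ha.eq_zero (t + 1) (by omega) h]
    linarith

theorem le_add_mul (ha : IsACIAdjustment α γ j c a) (hγ : 0 ≤ γ) (hα : 0 ≤ α)
    (hc : ∀ t, 1 ≤ t → 0 ≤ c t) {s : ℕ} (hs : 1 ≤ s) (n : ℕ) : a (s + n) ≤ a s + n * γ := by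
  have : Antitone fun n : ℕ => a (s + n) - n * γ := antitone_nat_of_succ_le fun n => by
    have := ha.succ_le_add hγ hα hc (t := s + n) (by omega)
    simp only [Nat.cast_succ, ← add_assoc]
    linarith
  simpa using this (Nat.zero_le n)

/-- The feedback `cover = 1` whenever `a > M` reaches the update `j` steps later, during which
`a` rises by at most `(j + 1) γ`. -/
theorem le_of_cover_eq_one (ha : IsACIAdjustment α γ j c a) (hγ : 0 ≤ γ) (hα : 0 ≤ α)
    (hM : 0 ≤ M) (hc : ∀ t, 1 ≤ t → 0 ≤ c t) (hc1 : ∀ t, 1 ≤ t → M < a t → c t = 1) :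
    ∀ t, 1 ≤ t → a t ≤ M + (j + 1) * γ := by
  intro t
  induction t using Nat.strong_induction_on with
  | _ t ih =>
    intro ht
    rcases le_or_gt t (j + 1) with h | h
    · rw [ha.eq_zero t ht h]
      positivity
    obtain ⟨t, rfl⟩ : ∃ t', t = t' + 1 := ⟨t - 1, by omega⟩
    rcases le_or_gt (a (t - j)) M with hle | hgt
    · have := ha.le_add_mul hγ hα hc (s := t - j) (by omega) (j + 1)
      rw [show t - j + (j + 1) = t + 1 by omega] at this
      push_cast at this
      linarith
    · rw [ha.succ_eq t (by omega), hc1 (t - j) (by omega) hgt]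
      nlinarith [ih t (by omega) (by omega)]

theorem abs_le (ha : IsACIAdjustment α γ j c a) (hγ : 0 ≤ γ) (hα0 : 0 ≤ α) (hα1 : α ≤ 1)
    (hM : 0 ≤ M) (hc : ∀ t, 1 ≤ t → 0 ≤ c t ∧ c t ≤ 1)
    (hc1 : ∀ t, 1 ≤ t → M < a t → c t = 1) (hc0 : ∀ t, 1 ≤ t → a t < -M → c t = 0)
    {t : ℕ} (ht : 1 ≤ t) : |a t| ≤ M + (j + 1) * γ := by
  have hup := ha.le_of_cover_eq_one hγ hα0 hM (fun t ht => (hc t ht).1) hc1 t ht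
  have hlow := ha.neg.le_of_cover_eq_one hγ (by linarith) hM
    (fun t ht => by linarith [(hc t ht).2])
    (fun t ht hneg => by simp [hc0 t ht (by simp only [Pi.neg_apply] at hneg; linarith)]) t ht
  rw [_root_.abs_le]
  constructor <;> simp only [Pi.neg_apply] at hlow <;> linarith

theorem add_succ_eq (ha : IsACIAdjustment α γ j c a) (n : ℕ) :
    a (n + j + 1) = γ * (n * (1 - α) - ∑ t ∈ Icc 1 n, c t) := by
  induction n with
  | zero => simpa using ha.eq_zero (j + 1) (by omega) le_rfl
  | succ n ih =>
    rw [show n + 1 + j + 1 = n + j + 1 + 1 by omega, ha.succ_eq _ (by omega), ih,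
      show n + j + 1 - j = n + 1 by omega, sum_Icc_succ_top (by omega)]
    push_cast
    ring

theorem abs_sum_sub_le (ha : IsACIAdjustment α γ j c a) (hγ : 0 < γ) (hα0 : 0 ≤ α)
    (hα1 : α ≤ 1) (hM : 0 ≤ M) (hc : ∀ t, 1 ≤ t → 0 ≤ c t ∧ c t ≤ 1)
    (hc1 : ∀ t, 1 ≤ t → M < a t → c t = 1) (hc0 : ∀ t, 1 ≤ t → a t < -M → c t = 0)
    (T : ℕ) : |∑ t ∈ Icc 1 T, c t - T * (1 - α)| ≤ (M + (j + 1) * γ) / γ := by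
  have hsum : ∑ t ∈ Icc 1 T, c t - T * (1 - α) = -(a (T + j + 1) / γ) := by
    rw [ha.add_succ_eq T]
    field_simp
    ring
  rw [hsum, abs_neg, abs_div, abs_of_pos hγ]
  gcongr
  exact ha.abs_le hγ.le hα0 hα1 hM hc hc1 hc0 (by omega)

end IsACIAdjustment

theorem tendsto_one_div_mul_of_abs_sub_le {u : ℕ → ℝ} {L C : ℝ}
    (h : ∀ T : ℕ, |u T - T * L| ≤ C) :
    Tendsto (fun T : ℕ => 1 / (T : ℝ) * u T) atTop (nhds L) := by
  have hdev : Tendsto (fun T : ℕ => 1 / (T : ℝ) * u T - L) atTop (nhds 0) := by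
    refine squeeze_zero_norm' ?_ (tendsto_const_div_atTop_nhds_zero_nat C)
    filter_upwards [eventually_gt_atTop 0] with T hT
    have hT : (0 : ℝ) < T := by exact_mod_cast hT
    rw [Real.norm_eq_abs, show 1 / (T : ℝ) * u T - L = (u T - T * L) / T by field_simp,
      abs_div, abs_of_pos hT]
    gcongr
    exact h T
  simpa using hdev.add_const L

theorem tendsto_average_cover {α γ M : ℝ} {j : ℕ} {s q cover a : ℕ → ℝ}
    (hα0 : 0 ≤ α) (hα1 : α ≤ 1) (hγ : 0 < γ) (hM : 0 ≤ M)
    (hs : ∀ t, 1 ≤ t → s t ≤ M) (hq : ∀ t, 1 ≤ t → 0 ≤ q t ∧ q t ≤ M)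
    (hcover : ∀ t, cover t = if 0 < q t + a t ∧ s t ≤ q t + a t then (1 : ℝ) else 0)
    (ha : IsACIAdjustment α γ j cover a) :
    Tendsto (fun T : ℕ => 1 / (T : ℝ) * ∑ t ∈ Icc 1 T, cover t) atTop (nhds (1 - α)) := by
  have hc : ∀ t, 1 ≤ t → 0 ≤ cover t ∧ cover t ≤ 1 := fun t _ => by
    rw [hcover t]
    split_ifs <;> norm_num
  have hc1 : ∀ t, 1 ≤ t → M < a t → cover t = 1 := fun t ht hMa => by
    rw [hcover t, if_pos]
    constructor <;> linarith [hs t ht, hq t ht]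
  have hc0 : ∀ t, 1 ≤ t → a t < -M → cover t = 0 := fun t ht hMa => by
    rw [hcover t, if_neg]
    rintro ⟨hpos, -⟩
    linarith [hq t ht]
  exact tendsto_one_div_mul_of_abs_sub_le (ha.abs_sum_sub_le hγ hα0 hα1 hM hc hc1 hc0)

/-- Global average coverage over all dimensions and prediction steps:
with an independent copy of the adaptive-adjustment setup for each pair
`(i, j)` (lag equal to the prediction step `j`), the overall empirical coverage
`(1/(T·p·d₁))·∑_{t=1}^{T} ∑_{i=1}^{p} ∑_{j=1}^{d₁} cover i j t` converges to
`1 − α` as `T → ∞`. -/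
theorem global_average_coverage_tendsto
    (α γ M : ℝ) (p d₁ : ℕ)
    (hα0 : 0 ≤ α) (hα1 : α ≤ 1) (hγ : 0 < γ) (hM : 0 ≤ M)
    (hp : 1 ≤ p) (hd : 1 ≤ d₁)
    (s qhat a cover : ℕ → ℕ → ℕ → ℝ)
    (hs : ∀ i ∈ Icc 1 p, ∀ j ∈ Icc 1 d₁, ∀ t, 1 ≤ t →
      0 ≤ s i j t ∧ s i j t ≤ M)
    (hq : ∀ i ∈ Icc 1 p, ∀ j ∈ Icc 1 d₁, ∀ t, 1 ≤ t →
      0 ≤ qhat i j t ∧ qhat i j t ≤ M)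
    (hcover : ∀ i ∈ Icc 1 p, ∀ j ∈ Icc 1 d₁, ∀ t, cover i j t =
      if 0 < qhat i j t + a i j t ∧ s i j t ≤ qhat i j t + a i j t
        then (1 : ℝ) else 0)
    (ha0 : ∀ i ∈ Icc 1 p, ∀ j ∈ Icc 1 d₁, ∀ t, 1 ≤ t → t ≤ j + 1 → a i j t = 0)
    (harec : ∀ i ∈ Icc 1 p, ∀ j ∈ Icc 1 d₁, ∀ t, j + 1 ≤ t →
      a i j (t + 1) = a i j t + γ * (1 - cover i j (t - j) - α)) :
    Tendsto
      (fun T : ℕ =>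
        (1 / ((T : ℝ) * (p : ℝ) * (d₁ : ℝ))) *
          ∑ t ∈ Icc 1 T, ∑ i ∈ Icc 1 p, ∑ j ∈ Icc 1 d₁, cover i j t)
      atTop (nhds (1 - α)) := by
  have hpair : ∀ i ∈ Icc 1 p, ∀ j ∈ Icc 1 d₁, Tendsto
      (fun T : ℕ => 1 / (T : ℝ) * ∑ t ∈ Icc 1 T, cover i j t) atTop (nhds (1 - α)) :=
    fun i hi j hj => tendsto_average_cover hα0 hα1 hγ hM
      (fun t ht => (hs i hi j hj t ht).2) (hq i hi j hj) (hcover i hi j hj)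
      ⟨ha0 i hi j hj, harec i hi j hj⟩
  have hmean := ((tendsto_finsetSum _ fun i hi => tendsto_finsetSum _ fun j hj =>
    hpair i hi j hj).const_mul (1 / ((p : ℝ) * d₁)))
  have hp0 : (p : ℝ) ≠ 0 := by positivity
  have hd0 : (d₁ : ℝ) ≠ 0 := by positivity
  convert hmean using 2 with T
  · rw [sum_comm]
    simp only [← mul_sum]
    rw [sum_congr rfl fun i _ => sum_comm]
    ring
  · simp only [sum_const, Nat.card_Icc, Nat.add_sub_cancel, nsmul_eq_mul]
    field_simp
end

section
/- Quadratic lower bound for the expected pinball loss around the quantile (equation (45) in the proof of the paper's Theorem 2): Let β be an integrable real random variable whose law has a density p with respect to Lebesgue measure, let α ∈ [0,1], and let a, a* be real numbers with P(β ≥ a*) = α. If p(x) ≥ p₁ > 0 for almost every x in the closed interval with endpoints a and a*, then E[ℓ_α(β, a)] − E[ℓ_α(β, a*)] ≥ (p₁/2)·(a − a*)². -/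
/-!
Pointwise, `ℓ_α(y, b) - ℓ_α(y, m) = (b - m) (1{y ≤ m} - (1 - α)) + |y - b| 1{y ∈ Ι m b}`.
Take `m = a*`: the law of `β` has no atoms, so `P(β ≤ a*) = 1 - P(β ≥ a*) = 1 - α` and the first
term has expectation zero. On the interval between `a*` and `a` the law dominates `p₁ · Lebesgue`,
so the expectation of the second term is at least `p₁ ∫_{Ι a* a} |y - a| dy = p₁ (a - a*)² / 2`.
-/

open MeasureTheory Set
open scoped ENNReal Interval

def pinballLoss (α y b : ℝ) : ℝ := max ((1 - α) * (y - b)) (α * (b - y))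

lemma pinballLoss_eq (α y b : ℝ) : pinballLoss α y b = (1 - α) * (y - b) + max (b - y) 0 := by
  unfold pinballLoss; grind

lemma continuous_pinballLoss (α b : ℝ) : Continuous fun y => pinballLoss α y b := by
  unfold pinballLoss; fun_prop

lemma pinballLoss_sub_pinballLoss (α y b m : ℝ) :
    pinballLoss α y b - pinballLoss α y m =
      (b - m) * ((Iic m).indicator 1 y - (1 - α)) + (Ι m b).indicator (fun x => |x - b|) y := by
  classical
  simp only [pinballLoss_eq, indicator_apply, mem_Iic, mem_uIoc, Pi.one_apply]
  grind

lemma integrable_pinballLoss {ν : Measure ℝ} [IsFiniteMeasure ν] (hid : Integrable id ν)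
    (α b : ℝ) :
    Integrable (fun y => pinballLoss α y b) ν := by
  simp_rw [pinballLoss_eq]
  exact ((hid.sub (integrable_const b)).const_mul _).add ((integrable_const b).sub hid).pos_part

lemma integral_pinballLoss_sub_integral_pinballLoss {ν : Measure ℝ} [IsProbabilityMeasure ν]
    (hid : Integrable id ν) (α b m : ℝ) :
    ∫ y, pinballLoss α y b ∂ν - ∫ y, pinballLoss α y m ∂ν =
      (b - m) * (ν.real (Iic m) - (1 - α)) + ∫ y in Ι m b, |y - b| ∂ν := by
  have hIic : Integrable ((Iic m).indicator (1 : ℝ → ℝ)) ν :=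
    (integrable_const (1 : ℝ)).indicator measurableSet_Iic
  have hnear : Integrable ((Ι m b).indicator fun y => |y - b|) ν :=
    (hid.sub (integrable_const b)).abs.indicator measurableSet_uIoc
  have hcdf : Integrable (fun y => (b - m) * ((Iic m).indicator (1 : ℝ → ℝ) y - (1 - α))) ν :=
    (hIic.sub (integrable_const _)).const_mul _
  rw [← integral_sub (integrable_pinballLoss hid α b) (integrable_pinballLoss hid α m)]
  simp_rw [pinballLoss_sub_pinballLoss]
  rw [integral_add hcdf hnear, integral_const_mul,
    integral_sub hIic (integrable_const _), integral_indicator_one measurableSet_Iic,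
    integral_const, integral_indicator measurableSet_uIoc, probReal_univ, one_smul]

lemma measureReal_Iic_eq_one_sub_measureReal_Ici {ν : Measure ℝ} [IsProbabilityMeasure ν]
    [NullSingletonClass ν] (m : ℝ) :
    ν.real (Iic m) = 1 - ν.real (Ici m) := by
  rw [← compl_Ioi, probReal_compl_eq_one_sub measurableSet_Ioi, measureReal_congr Ioi_ae_eq_Ici]

lemma setIntegral_uIoc_abs_sub (m b : ℝ) : ∫ y in Ι m b, |y - b| = (b - m) ^ 2 / 2 := by
  rcases le_total m b with h | h
  · have habs : EqOn (fun y => |y - b|) (fun y => b - y) (Ioc m b) := fun y hy =>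
      (abs_sub_comm y b).trans (abs_of_nonneg (sub_nonneg.2 hy.2))
    rw [uIoc_of_le h, setIntegral_congr_fun measurableSet_Ioc habs,
      ← intervalIntegral.integral_of_le h, intervalIntegral.integral_comp_sub_left (fun x => x)]
    simp
  · have habs : EqOn (fun y => |y - b|) (fun y => y - b) (Ioc b m) := fun y hy =>
      abs_of_nonneg (sub_nonneg.2 hy.1.le)
    rw [uIoc_of_ge h, setIntegral_congr_fun measurableSet_Ioc habs,
      ← intervalIntegral.integral_of_le h, intervalIntegral.integral_comp_sub_right (fun x => x)]
    simp
    ring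

lemma restrict_smul_le_restrict_withDensity {X : Type*} [MeasurableSpace X] {μ : Measure X}
    {f : X → ℝ≥0∞} {c : ℝ≥0∞} {s : Set X} (hs : MeasurableSet s)
    (hf : ∀ᵐ x ∂μ.restrict s, c ≤ f x) :
    (c • μ).restrict s ≤ (μ.withDensity f).restrict s := by
  rw [restrict_withDensity hs, Measure.restrict_smul, ← withDensity_const]
  exact withDensity_mono hf

lemma mul_setIntegral_le_setIntegral_withDensity {X : Type*} [MeasurableSpace X]
    {μ : Measure X} {p : X → ℝ} {c : ℝ} (hc : 0 ≤ c) {s : Set X} (hs : MeasurableSet s)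
    (hp : ∀ᵐ x ∂μ.restrict s, c ≤ p x)
    {g : X → ℝ} (hg : ∀ x ∈ s, 0 ≤ g x)
    (hgi : IntegrableOn g s (μ.withDensity fun x => ENNReal.ofReal (p x))) :
    c * ∫ x in s, g x ∂μ ≤ ∫ x in s, g x ∂μ.withDensity fun x => ENNReal.ofReal (p x) := by
  have hle := restrict_smul_le_restrict_withDensity hs
    (hp.mono fun x hx => ENNReal.ofReal_le_ofReal hx)
  have hmono := integral_mono_measure hle (ae_restrict_of_forall_mem hs hg) hgi
  rwa [Measure.restrict_smul, integral_smul_measure, ENNReal.toReal_ofReal hc,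
    smul_eq_mul] at hmono

theorem pinball_quadratic_lower_bound_general
    {Ω : Type*} [MeasurableSpace Ω] (μ : Measure Ω) [IsProbabilityMeasure μ]
    (β : Ω → ℝ) (hβ : Integrable β μ)
    (p : ℝ → ℝ) (p₁ : ℝ) (hp₁ : 0 < p₁)
    (hdens : Measure.map β μ =
      (volume : Measure ℝ).withDensity (fun x => ENNReal.ofReal (p x)))
    (α a astar : ℝ)
    (hq : (μ {ω | astar ≤ β ω}).toReal = α)
    (hplb : ∀ᵐ x ∂((volume : Measure ℝ).restrict (Set.uIcc a astar)),
      p₁ ≤ p x) :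
    (∫ ω, max ((1 - α) * (β ω - a)) (α * (a - β ω)) ∂μ) -
        (∫ ω, max ((1 - α) * (β ω - astar)) (α * (astar - β ω)) ∂μ) ≥
      (p₁ / 2) * (a - astar) ^ 2 := by
  have hβm : AEMeasurable β μ := hβ.aemeasurable
  have hloss (b : ℝ) : ∫ ω, pinballLoss α (β ω) b ∂μ = ∫ y, pinballLoss α y b ∂μ.map β :=
    (integral_map hβm (continuous_pinballLoss α b).aestronglyMeasurable).symm
  have hid : Integrable id (μ.map β) := (integrable_map_measure aestronglyMeasurable_id hβm).mpr hβ
  have hquantile : (μ.map β).real (Ici astar) = α := by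
    rw [measureReal_def, Measure.map_apply_of_aemeasurable hβm measurableSet_Ici]
    exact hq
  have hprob := Measure.isProbabilityMeasure_map hβm
  rw [hdens] at hid hquantile hprob
  change ∫ ω, pinballLoss α (β ω) a ∂μ - ∫ ω, pinballLoss α (β ω) astar ∂μ ≥ _
  rw [ge_iff_le, hloss, hloss, hdens, integral_pinballLoss_sub_integral_pinballLoss hid,
    measureReal_Iic_eq_one_sub_measureReal_Ici, hquantile, sub_self, mul_zero, zero_add]
  calc p₁ / 2 * (a - astar) ^ 2 = p₁ * ∫ y in Ι astar a, |y - a| := by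
        rw [setIntegral_uIoc_abs_sub]; ring
    _ ≤ ∫ y in Ι astar a, |y - a| ∂volume.withDensity fun x => ENNReal.ofReal (p x) :=
      mul_setIntegral_le_setIntegral_withDensity hp₁.le measurableSet_uIoc
        (ae_restrict_of_ae_restrict_of_subset (uIoc_subset_uIcc.trans_eq (uIcc_comm _ _)) hplb)
        (fun _ _ => abs_nonneg _) (hid.sub (integrable_const a)).abs.integrableOn

/-- Quadratic lower bound for the expected pinball loss around the quantile
(equation (45)): if the law of `β` has a density `p` bounded below by `p₁ > 0`
on the closed interval with endpoints `a` and `astar`, and `P(β ≥ astar) = α`,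
then `E[ℓ_α(β, a)] − E[ℓ_α(β, astar)] ≥ (p₁/2)·(a − astar)²`. -/
theorem pinball_quadratic_lower_bound
    {Ω : Type*} [MeasurableSpace Ω] (μ : Measure Ω) [IsProbabilityMeasure μ]
    (β : Ω → ℝ) (hβ : Integrable β μ)
    (p : ℝ → ℝ) (p₁ : ℝ) (hp₁ : 0 < p₁)
    (hdens : Measure.map β μ =
      (volume : Measure ℝ).withDensity (fun x => ENNReal.ofReal (p x)))
    (α a astar : ℝ) (hα0 : 0 ≤ α) (hα1 : α ≤ 1)
    (hq : (μ {ω | astar ≤ β ω}).toReal = α)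
    (hplb : ∀ᵐ x ∂((volume : Measure ℝ).restrict (Set.uIcc a astar)),
      p₁ ≤ p x) :
    (∫ ω, max ((1 - α) * (β ω - a)) (α * (a - β ω)) ∂μ) -
        (∫ ω, max ((1 - α) * (β ω - astar)) (α * (astar - β ω)) ∂μ) ≥
      (p₁ / 2) * (a - astar) ^ 2 :=
  pinball_quadratic_lower_bound_general μ β hβ p p₁ hp₁ hdens α a astar hq hplb
end
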